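/- Let Γ be a cancellation monoid with neutral element e, A a Γ-graded ring, and let M and N be Γ-graded A-modules. Let φ: M → N be a surjective graded A-homomorphism. If N is projective as an (ungraded) A-module, then φ admits a graded section: there exists a graded A-homomorphism σ: N → M with φ ∘ σ = id_N. -/

import Mathlib

/-!
Projectivity gives an ungraded `A`-linear section `s` of `φ`. Its degree-zero part
`σ y = ∑ᵢ (s yᵢ)ᵢ` is graded by construction, and it is still `A`-linear: for homogeneous
`a ∈ 𝒜ⱼ` and `y ∈ 𝒩ᵢ`, the degree `j + i` component of `a • s y` is `a • (s y)ᵢ`, by left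
cancellation in `Γ`. Since `φ` is graded it commutes with taking components, so
`φ ∘ σ` is the degree-zero part of `φ ∘ s = id`, which is `id`.
-/

namespace DirectSum

variable {ι : Type*} [DecidableEq ι]

section Additive

variable {M N P σ τ υ : Type*} [AddCommMonoid M] [AddCommMonoid N] [AddCommMonoid P]
  [SetLike σ M] [AddSubmonoidClass σ M] [SetLike τ N] [AddSubmonoidClass τ N]
  [SetLike υ P] [AddSubmonoidClass υ P]
  (ℳ : ι → σ) (𝒩 : ι → τ) (ℒ : ι → υ) [Decomposition ℳ] [Decomposition 𝒩] [Decomposition ℒ]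

theorem Decomposition.addHom_ext {f g : N →+ M} (h : ∀ i, ∀ y ∈ 𝒩 i, f y = g y) : f = g := by
  ext y
  induction y using Decomposition.inductionOn 𝒩 with
  | zero => simp
  | homogeneous y => exact h _ _ y.2
  | add y₁ y₂ h₁ h₂ => rw [map_add, map_add, h₁, h₂]

theorem map_decompose_of_forall_mem (g : M →+ P)
    (hg : ∀ i, ∀ m ∈ ℳ i, g m ∈ ℒ i) (m : M) (i : ι) :
    g (decompose ℳ m i) = decompose ℒ (g m) i := by
  induction m using Decomposition.inductionOn ℳ with
  | zero => simp
  | @homogeneous j m =>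
    rcases eq_or_ne j i with rfl | hji
    · rw [decompose_of_mem_same ℳ m.2, decompose_of_mem_same ℒ (hg _ _ m.2)]
    · rw [decompose_of_mem_ne ℳ m.2 hji, decompose_of_mem_ne ℒ (hg _ _ m.2) hji, map_zero]
  | add m₁ m₂ h₁ h₂ =>
    simp only [map_add, decompose_add, add_apply, AddMemClass.coe_add, h₁, h₂]

/-- The degree-zero component `y ↦ ∑ᵢ (f yᵢ)ᵢ` of an additive map between graded groups. -/
def degreeZeroPart (f : N →+ M) : N →+ M :=
  (toAddMonoid fun i =>
    ({ toFun := fun y => (decompose ℳ (f y) i : M)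
       map_zero' := by simp
       map_add' := fun _ _ => by simp } : 𝒩 i →+ M)).comp
    (decomposeAddEquiv 𝒩 : N →+ ⨁ i, 𝒩 i)

variable {ℳ 𝒩} in
theorem degreeZeroPart_apply_of_mem (f : N →+ M) {i : ι} {y : N} (hy : y ∈ 𝒩 i) :
    degreeZeroPart ℳ 𝒩 f y = decompose ℳ (f y) i := by
  simp [degreeZeroPart, decompose_of_mem 𝒩 hy]

variable {ℳ 𝒩} in
theorem degreeZeroPart_apply_mem (f : N →+ M) {i : ι} {y : N} (hy : y ∈ 𝒩 i) :
    degreeZeroPart ℳ 𝒩 f y ∈ ℳ i := by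
  rw [degreeZeroPart_apply_of_mem f hy]
  exact (decompose ℳ (f y) i).2

theorem degreeZeroPart_eq_self {f : N →+ M} (hf : ∀ i, ∀ y ∈ 𝒩 i, f y ∈ ℳ i) :
    degreeZeroPart ℳ 𝒩 f = f :=
  Decomposition.addHom_ext 𝒩 fun i y hy => by
    rw [degreeZeroPart_apply_of_mem f hy, decompose_of_mem_same ℳ (hf i y hy)]

theorem comp_degreeZeroPart {g : M →+ P} (hg : ∀ i, ∀ m ∈ ℳ i, g m ∈ ℒ i) (f : N →+ M) :
    g.comp (degreeZeroPart ℳ 𝒩 f) = degreeZeroPart ℒ 𝒩 (g.comp f) :=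
  Decomposition.addHom_ext 𝒩 fun i y hy => by
    rw [AddMonoidHom.comp_apply, degreeZeroPart_apply_of_mem f hy,
      degreeZeroPart_apply_of_mem _ hy, map_decompose_of_forall_mem ℳ ℒ g hg,
      AddMonoidHom.comp_apply]

end Additive

section Module

variable [AddLeftCancelMonoid ι] {A M N S σ τ : Type*} [Semiring A]
  [AddCommMonoid M] [Module A M] [AddCommMonoid N] [Module A N]
  [SetLike S A] [SetLike σ M] [AddSubmonoidClass σ M]
  [SetLike τ N] [AddSubmonoidClass τ N]
  (𝒜 : ι → S) (ℳ : ι → σ) (𝒩 : ι → τ) [Decomposition ℳ] [Decomposition 𝒩]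

theorem coe_decompose_smul_add_of_left_mem [SetLike.GradedSMul 𝒜 ℳ] {a : A} {j : ι}
    (ha : a ∈ 𝒜 j) (m : M) (i : ι) :
    (decompose ℳ (a • m) (j + i) : M) = a • (decompose ℳ m i : M) := by
  induction m using Decomposition.inductionOn ℳ with
  | zero => simp
  | @homogeneous k m =>
    have ham : a • (m : M) ∈ ℳ (j + k) := SetLike.GradedSMul.smul_mem ha m.2
    rcases eq_or_ne k i with rfl | hki
    · rw [decompose_of_mem_same ℳ m.2, decompose_of_mem_same ℳ ham]
    · rw [decompose_of_mem_ne ℳ m.2 hki,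
        decompose_of_mem_ne ℳ ham (fun h => hki (add_left_cancel h)), smul_zero]
  | add m₁ m₂ h₁ h₂ =>
    simp only [smul_add, decompose_add, add_apply, AddMemClass.coe_add, h₁, h₂]

theorem degreeZeroPart_map_smul [AddSubmonoidClass S A] [Decomposition 𝒜]
    [SetLike.GradedSMul 𝒜 ℳ] [SetLike.GradedSMul 𝒜 𝒩] (f : N →+ M)
    (hf : ∀ (a : A) (y : N), f (a • y) = a • f y)
    (a : A) (y : N) : degreeZeroPart ℳ 𝒩 f (a • y) = a • degreeZeroPart ℳ 𝒩 f y := by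
  induction a using Decomposition.inductionOn 𝒜 generalizing y with
  | zero => simp
  | @homogeneous j a =>
    induction y using Decomposition.inductionOn 𝒩 with
    | zero => simp
    | @homogeneous i y =>
      have hay : (a : A) • (y : N) ∈ 𝒩 (j + i) := SetLike.GradedSMul.smul_mem a.2 y.2
      rw [degreeZeroPart_apply_of_mem f hay, degreeZeroPart_apply_of_mem f y.2, hf,
        coe_decompose_smul_add_of_left_mem 𝒜 ℳ a.2]
    | add y₁ y₂ h₁ h₂ => rw [smul_add, map_add, h₁, h₂, map_add, smul_add]
  | add a₁ a₂ h₁ h₂ => rw [add_smul, map_add, h₁, h₂, add_smul]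

def degreeZeroPartₗ [AddSubmonoidClass S A] [Decomposition 𝒜]
    [SetLike.GradedSMul 𝒜 ℳ] [SetLike.GradedSMul 𝒜 𝒩]
    (f : N →ₗ[A] M) : N →ₗ[A] M where
  __ := degreeZeroPart ℳ 𝒩 f.toAddMonoidHom
  map_smul' := degreeZeroPart_map_smul 𝒜 ℳ 𝒩 f.toAddMonoidHom f.map_smul

end Module

end DirectSum

theorem exists_graded_section_of_projective
    {Γ : Type*} [AddCancelMonoid Γ] [DecidableEq Γ]
    {A : Type*} [Ring A] (𝒜 : Γ → AddSubgroup A) [GradedRing 𝒜]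
    {M N : Type*} [AddCommGroup M] [Module A M] [AddCommGroup N] [Module A N]
    (ℳ : Γ → AddSubgroup M) [SetLike.GradedSMul 𝒜 ℳ] [DirectSum.Decomposition ℳ]
    (𝒩 : Γ → AddSubgroup N) [SetLike.GradedSMul 𝒜 𝒩] [DirectSum.Decomposition 𝒩]
    (φ : M →ₗ[A] N) (hsurj : Function.Surjective φ)
    (hgraded : ∀ γ : Γ, ∀ x ∈ ℳ γ, φ x ∈ 𝒩 γ)
    (hproj : Module.Projective A N) :
    ∃ σ : N →ₗ[A] M, (∀ γ : Γ, ∀ y ∈ 𝒩 γ, σ y ∈ ℳ γ) ∧ φ ∘ₗ σ = LinearMap.id := by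
  obtain ⟨s, hs⟩ := Module.projective_lifting_property φ LinearMap.id hsurj
  refine ⟨DirectSum.degreeZeroPartₗ 𝒜 ℳ 𝒩 s,
    fun γ y hy => DirectSum.degreeZeroPart_apply_mem _ hy, ?_⟩
  apply LinearMap.toAddMonoidHom_injective
  calc φ.toAddMonoidHom.comp (DirectSum.degreeZeroPart ℳ 𝒩 s.toAddMonoidHom)
      = DirectSum.degreeZeroPart 𝒩 𝒩 (φ ∘ₗ s).toAddMonoidHom :=
        DirectSum.comp_degreeZeroPart ℳ 𝒩 𝒩 hgraded _
    _ = AddMonoidHom.id N := by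
      rw [hs]
      exact DirectSum.degreeZeroPart_eq_self 𝒩 𝒩 fun _ _ hy => hy
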